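/- Assume α₂ > α₃, A∞ > B and h₀ > 0. Then: (i) T(0) > 0; and (ii) the composite function U(z) := T(w(z)) is strictly decreasing on (z₀, ∞), in the sense that for all z₀ < z < z', if w ≥ 0 satisfies erf(w·√(α₁/α₂)) = H(z) and w' ≥ 0 satisfies erf(w'·√(α₁/α₂)) = H(z'), then T(w') < T(w). -/

import Mathlib

noncomputable section

/-- The error function `erf x = (2/√π) ∫₀ˣ exp(−s²) ds`. -/
def erf (x : ℝ) : ℝ := (2 / Real.sqrt Real.pi) * ∫ s in (0:ℝ)..x, Real.exp (-(s^2))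

/-- The complementary error function. -/
def erfc (x : ℝ) : ℝ := 1 - erf x

/-- Physical data of the three-phase Stefan problem: positive thermal conductivities,
specific heats, mass density, latent heats, and temperatures `B > C > D`. -/
structure Params where
  k₁ : ℝ
  k₂ : ℝ
  k₃ : ℝ
  c₁ : ℝ
  c₂ : ℝ
  c₃ : ℝ
  ρ : ℝ
  ℓ₁ : ℝ
  ℓ₂ : ℝ
  B : ℝ
  C : ℝ
  D : ℝ
  hk₁ : 0 < k₁
  hk₂ : 0 < k₂
  hk₃ : 0 < k₃
  hc₁ : 0 < c₁
  hc₂ : 0 < c₂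
  hc₃ : 0 < c₃
  hρ : 0 < ρ
  hℓ₁ : 0 < ℓ₁
  hℓ₂ : 0 < ℓ₂
  hBC : C < B
  hCD : D < C

namespace Params

/-- Thermal diffusivity of phase 1. -/
def α₁ (p : Params) : ℝ := p.k₁ / (p.ρ * p.c₁)

/-- Thermal diffusivity of phase 2. -/
def α₂ (p : Params) : ℝ := p.k₂ / (p.ρ * p.c₂)

/-- Thermal diffusivity of phase 3. -/
def α₃ (p : Params) : ℝ := p.k₃ / (p.ρ * p.c₃)

/-- Stefan number `Ste₁ = c₁(C−D)/ℓ₁`. -/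
def Ste₁ (p : Params) : ℝ := p.c₁ * (p.C - p.D) / p.ℓ₁

/-- Stefan number `Ste₂ = c₂(B−C)/ℓ₂`. -/
def Ste₂ (p : Params) : ℝ := p.c₂ * (p.B - p.C) / p.ℓ₂

/-- `φ(z) = z + (Ste₁/√π) exp(−z²)/erfc(z)`. -/
def φ (p : Params) (z : ℝ) : ℝ :=
  z + (p.Ste₁ / Real.sqrt Real.pi) * Real.exp (-(z^2)) / erfc z

/-- `H(z) = erf(z√(α₁/α₂)) − (Ste₂/√π)(ℓ₂/ℓ₁)√(k₂c₁/(k₁c₂)) exp(−z²α₁/α₂)/φ(z)`. -/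
def H (p : Params) (z : ℝ) : ℝ :=
  erf (z * Real.sqrt (p.α₁ / p.α₂)) -
    (p.Ste₂ / Real.sqrt Real.pi) * (p.ℓ₂ / p.ℓ₁) *
      Real.sqrt (p.k₂ * p.c₁ / (p.k₁ * p.c₂)) *
      (Real.exp (-(z^2) * (p.α₁ / p.α₂)) / p.φ z)

/-- `Q(z) = (ℓ₁/ℓ₂) φ(z) exp(z² α₁/α₂)`. -/
def Q (p : Params) (z : ℝ) : ℝ :=
  (p.ℓ₁ / p.ℓ₂) * p.φ z * Real.exp (z^2 * (p.α₁ / p.α₂))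

/-- The function `T` arising from the Robin (convective) boundary condition with
heat-transfer coefficient `h₀` and bulk temperature `Ainf`. -/
def T (p : Params) (h₀ Ainf : ℝ) (z : ℝ) : ℝ :=
  (p.Ste₂ / (Real.sqrt Real.pi * p.c₂)) * ((Ainf - p.B) / (p.B - p.C)) *
    Real.sqrt (p.k₃ * p.c₁ * p.c₃ / p.k₁) *
    (Real.exp (-(z^2) * p.α₁ * (1 / p.α₃ - 1 / p.α₂)) /
      (p.k₃ / (h₀ * Real.sqrt (Real.pi * p.α₃)) + erf (z * Real.sqrt (p.α₁ / p.α₃)))) -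
  z * Real.exp (z^2 * (p.α₁ / p.α₂))

/-- The function `V` arising from the Dirichlet boundary condition with temperature `A`. -/
def V (p : Params) (A : ℝ) (z : ℝ) : ℝ :=
  ((A - p.B) / p.ℓ₂) * Real.sqrt (p.c₁ * p.c₃ * p.k₃ / (Real.pi * p.k₁)) *
    (Real.exp (-(z^2) * (p.α₁ / p.α₃ - p.α₁ / p.α₂)) / erf (z * Real.sqrt (p.α₁ / p.α₃))) -
  z * Real.exp (z^2 * (p.α₁ / p.α₂))

/-- The function `P` arising from the Neumann boundary condition with flux coefficient `q₀`. -/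
def P (p : Params) (q₀ : ℝ) (z : ℝ) : ℝ :=
  Real.exp (z^2 * (p.α₁ / p.α₂)) *
    (-z + (q₀ / p.ℓ₂) * Real.sqrt (p.c₁ / (p.ρ * p.k₁)) * Real.exp (-(z^2) * (p.α₁ / p.α₃)))

/-- Critical heat-transfer coefficient `h₂`. -/
def h2 (p : Params) (Ainf z₀ : ℝ) : ℝ :=
  ((p.B - p.C) / (Ainf - p.B)) *
    Real.sqrt (p.k₂ * p.k₃ * p.c₂ / (Real.pi * p.c₃ * p.α₃)) *
    (1 / erf (z₀ * Real.sqrt (p.α₁ / p.α₂)))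

/-- Critical heat-flux coefficient `q₂`. -/
def q2 (p : Params) (z₀ : ℝ) : ℝ :=
  p.k₂ * (p.B - p.C) / (Real.sqrt (p.α₂ * Real.pi) * erf (z₀ * Real.sqrt (p.α₁ / p.α₂)))

end Params

/-! Shifting the variable gives `exp (x²) erfc x = (2/√π) ∫₀^∞ exp (-t² - 2xt) dt`, whose integrand
decreases in `x`; so `x ↦ exp (-x²) / erfc x` is monotone, `φ` is monotone, and `H` is strictly
increasing on `[0, ∞)`. Hence `z < z'` forces `w < w'`, and `T` is strictly decreasing on `[0, ∞)`:
its first term is a decreasing Gaussian factor (as `α₃ ≤ α₂`) over an increasing positive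
denominator, and its second term `-z exp (z² α₁/α₂)` is strictly decreasing. -/

open Real MeasureTheory Set

lemma integrable_exp_neg_sq : Integrable fun s : ℝ => exp (-s ^ 2) := by
  simpa using integrable_exp_neg_mul_sq one_pos

lemma erf_zero : erf 0 = 0 := by simp [erf]

lemma erf_strictMono : StrictMono erf := by
  intro a b hab
  have hpos : 0 < ∫ s in a..b, exp (-s ^ 2) :=
    intervalIntegral.intervalIntegral_pos_of_pos integrable_exp_neg_sq.intervalIntegrable
      (fun _ => exp_pos _) hab
  have hsplit := intervalIntegral.integral_add_adjacent_intervals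
    (integrable_exp_neg_sq.intervalIntegrable (a := 0) (b := a))
    integrable_exp_neg_sq.intervalIntegrable (c := b)
  unfold erf
  rw [← hsplit]
  exact mul_lt_mul_of_pos_left (lt_add_of_pos_right _ hpos) (by positivity)

lemma erf_nonneg {x : ℝ} (hx : 0 ≤ x) : 0 ≤ erf x :=
  erf_zero ▸ erf_strictMono.monotone hx

lemma erfc_eq_integral_Ioi (x : ℝ) : erfc x = 2 / √π * ∫ s in Ioi x, exp (-s ^ 2) := by
  have hsplit := intervalIntegral.integral_Ioi_sub_Ioi' (a := 0) (b := x)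
    integrable_exp_neg_sq.integrableOn integrable_exp_neg_sq.integrableOn
  have hhalf : ∫ s in Ioi (0 : ℝ), exp (-s ^ 2) = √π / 2 := by
    simpa using integral_gaussian_Ioi 1
  have : √π ≠ 0 := by positivity
  unfold erfc erf
  rw [← hsplit, hhalf]
  field_simp
  ring

lemma erfc_pos (x : ℝ) : 0 < erfc x := by
  rw [erfc_eq_integral_Ioi]
  refine mul_pos (by positivity) ?_
  rw [setIntegral_pos_iff_support_of_nonneg_ae (.of_forall fun _ => (exp_pos _).le)
    integrable_exp_neg_sq.integrableOn]
  simp [Function.support, exp_ne_zero]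

lemma exp_sq_mul_exp_neg_sq_add (x t : ℝ) :
    exp (x ^ 2) * exp (-(t + x) ^ 2) = exp (-t ^ 2 - 2 * x * t) := by
  rw [← exp_add]
  ring_nf

lemma integrable_exp_neg_sq_sub_mul (x : ℝ) : Integrable fun t => exp (-t ^ 2 - 2 * x * t) := by
  refine ((integrable_exp_neg_sq.comp_add_right x).const_mul (exp (x ^ 2))).congr
    (.of_forall fun t => ?_)
  exact exp_sq_mul_exp_neg_sq_add x t

lemma exp_sq_mul_erfc_eq_integral (x : ℝ) :
    exp (x ^ 2) * erfc x = 2 / √π * ∫ t in Ioi 0, exp (-t ^ 2 - 2 * x * t) := by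
  have hshift : ∫ s in Ioi x, exp (-s ^ 2) = ∫ t in Ioi 0, exp (-(t + x) ^ 2) := by
    rw [← (measurePreserving_add_right volume x).setIntegral_preimage_emb
      (measurableEmbedding_addRight x), preimage_add_const_Ioi, sub_self]
  rw [erfc_eq_integral_Ioi, hshift, mul_left_comm, ← integral_const_mul]
  simp only [exp_sq_mul_exp_neg_sq_add]

lemma exp_sq_mul_erfc_antitone : Antitone fun x => exp (x ^ 2) * erfc x := by
  intro a b hab
  simp only [exp_sq_mul_erfc_eq_integral]
  gcongr 2 / √π * ?_
  refine setIntegral_mono_on ?_ ?_ measurableSet_Ioi fun t ht => ?_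
  · exact (integrable_exp_neg_sq_sub_mul b).integrableOn
  · exact (integrable_exp_neg_sq_sub_mul a).integrableOn
  · gcongr
    exact ht.le

lemma exp_neg_sq_div_erfc_monotone : Monotone fun x => exp (-x ^ 2) / erfc x := by
  intro a b hab
  have key (x : ℝ) : exp (-x ^ 2) / erfc x = (exp (x ^ 2) * erfc x)⁻¹ := by
    rw [mul_inv, exp_neg, div_eq_mul_inv]
  simp only [key]
  exact inv_anti₀ (mul_pos (exp_pos _) (erfc_pos b)) (exp_sq_mul_erfc_antitone hab)

namespace Params

variable (p : Params)

lemma α₁_pos : 0 < p.α₁ := div_pos p.hk₁ (mul_pos p.hρ p.hc₁)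
lemma α₂_pos : 0 < p.α₂ := div_pos p.hk₂ (mul_pos p.hρ p.hc₂)
lemma α₃_pos : 0 < p.α₃ := div_pos p.hk₃ (mul_pos p.hρ p.hc₃)
lemma Ste₁_pos : 0 < p.Ste₁ := div_pos (mul_pos p.hc₁ (sub_pos.2 p.hCD)) p.hℓ₁
lemma Ste₂_pos : 0 < p.Ste₂ := div_pos (mul_pos p.hc₂ (sub_pos.2 p.hBC)) p.hℓ₂

lemma φ_pos {z : ℝ} (hz : 0 ≤ z) : 0 < p.φ z := by
  have := p.Ste₁_pos
  have := erfc_pos z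
  unfold φ
  positivity

lemma φ_monotone : Monotone p.φ := by
  intro a b hab
  have := p.Ste₁_pos
  have := exp_neg_sq_div_erfc_monotone hab
  simp only [φ, mul_div_assoc]
  gcongr

lemma H_strictMonoOn : StrictMonoOn p.H (Ici 0) := by
  intro a ha b _ hab
  have := p.α₁_pos
  have := p.α₂_pos
  have := p.Ste₂_pos
  have := p.hℓ₁
  have := p.hℓ₂
  have := p.φ_pos ha
  have := p.φ_monotone hab.le
  have : a ^ 2 ≤ b ^ 2 := pow_le_pow_left₀ ha hab.le 2
  unfold H
  refine (sub_lt_sub_right (erf_strictMono ?_) _).trans_le (sub_le_sub_left ?_ _) <;> gcongr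

lemma T_zero_pos {h₀ Ainf : ℝ} (hAinf : p.B < Ainf) (hh₀ : 0 < h₀) : 0 < p.T h₀ Ainf 0 := by
  have := p.Ste₂_pos
  have := p.α₃_pos
  have := p.hc₂
  have := sub_pos.2 hAinf
  have := sub_pos.2 p.hBC
  have := p.hk₃
  have := p.hk₁
  have := p.hc₁
  have := p.hc₃
  simp only [T, erf_zero, zero_pow two_ne_zero, neg_zero, zero_mul, exp_zero, add_zero, sub_zero]
  positivity

lemma T_strictAntiOn {h₀ Ainf : ℝ} (hα : p.α₃ ≤ p.α₂) (hAinf : p.B ≤ Ainf) (hh₀ : 0 < h₀) :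
    StrictAntiOn (p.T h₀ Ainf) (Ici 0) := by
  intro a ha b _ hab
  have := p.Ste₂_pos
  have := p.α₁_pos
  have := p.α₂_pos
  have := p.α₃_pos
  have := p.hc₂
  have := p.hk₃
  have := sub_nonneg.2 hAinf
  have := sub_pos.2 p.hBC
  have : a ^ 2 ≤ b ^ 2 := pow_le_pow_left₀ ha hab.le 2
  have : 0 ≤ 1 / p.α₃ - 1 / p.α₂ := sub_nonneg.2 (one_div_le_one_div_of_le p.α₃_pos hα)
  have : erf (a * √(p.α₁ / p.α₃)) ≤ erf (b * √(p.α₁ / p.α₃)) :=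
    erf_strictMono.monotone (by gcongr)
  have := erf_nonneg (mul_nonneg ha (sqrt_nonneg (p.α₁ / p.α₃)))
  unfold T
  refine (sub_le_sub_right ?_ _).trans_lt (sub_lt_sub_left ?_ _) <;> gcongr

end Params

/-- under `α₂ > α₃`, `A∞ > B`, `h₀ > 0`: (i) `T(0) > 0`; (ii) the composite
function `U = T ∘ w` is strictly decreasing on `(z₀, ∞)`. -/
theorem T_pos_and_U_strictAnti (p : Params) (h₀ Ainf z₀ : ℝ)
    (hα : p.α₃ < p.α₂) (hAinf : p.B < Ainf) (hh₀ : 0 < h₀)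
    (hz₀ : 0 < z₀ ∧ p.H z₀ = 0) :
    0 < p.T h₀ Ainf 0 ∧
    ∀ z z' w w' : ℝ, z₀ < z → z < z' → 0 ≤ w → 0 ≤ w' →
      erf (w * Real.sqrt (p.α₁ / p.α₂)) = p.H z →
      erf (w' * Real.sqrt (p.α₁ / p.α₂)) = p.H z' →
      p.T h₀ Ainf w' < p.T h₀ Ainf w := by
  refine ⟨p.T_zero_pos hAinf hh₀, fun z z' w w' hz hzz' hw hw' hwz hwz' => ?_⟩
  have hz_nonneg : 0 ≤ z := hz₀.1.le.trans hz.le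
  have hH : p.H z < p.H z' :=
    p.H_strictMonoOn hz_nonneg (hz_nonneg.trans hzz'.le) hzz'
  have hww' : w < w' := by
    rw [← hwz, ← hwz', erf_strictMono.lt_iff_lt] at hH
    exact lt_of_mul_lt_mul_right hH (Real.sqrt_nonneg _)
  exact p.T_strictAntiOn hα.le hAinf.le hh₀ hw hw' hww'
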